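/- arXiv:2308.03875 — 2 statements merged into one kernel-verified Lean document; each statement's English description precedes it below -/
import Mathlib

section
/- For any two density matrices ρ, σ on a finite-dimensional Hilbert space and any POVM {Γ_m} (a finite family of positive semidefinite operators summing to the identity), the fidelity satisfies F(ρ,σ) ≤ (Σ_m √(tr[Γ_m ρ] · tr[Γ_m σ]))². -/
/-!
Put `B = √ρ √σ`, so that `√(√σ ρ √σ) = √(Bᴴ B)`. Polar decomposition gives a contraction `W` with
`Wᴴ B = √(Bᴴ B)`, hence `tr √(Bᴴ B) = ∑ₘ Re tr (Wᴴ √ρ Γₘ √σ)`. Splitting `Γₘ = √Γₘ √Γₘ`, the `m`-th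
term is a Hilbert–Schmidt inner product of `W √σ √Γₘ` and `√ρ √Γₘ`, so by Cauchy–Schwarz it is at
most `‖√σ √Γₘ‖₂ ‖√ρ √Γₘ‖₂ = √(tr (Γₘ σ) tr (Γₘ ρ))`.
-/

open Matrix
open scoped Classical ComplexOrder

/-- The positive semidefinite square root of a matrix (junk value `0` off PSD matrices). -/
noncomputable def psdSqrt {d : Type*} [Fintype d] [DecidableEq d]
    (A : Matrix d d ℂ) : Matrix d d ℂ :=
  if h : A.PosSemidef then
    h.1.eigenvectorUnitary.1 * diagonal ((↑) ∘ (√·) ∘ h.1.eigenvalues) *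
      (star h.1.eigenvectorUnitary : Matrix d d ℂ)
  else 0

/-- Uhlmann fidelity `F(ρ,σ) = (tr √(√σ ρ √σ))²`. -/
noncomputable def qFidelity {d : Type*} [Fintype d] [DecidableEq d]
    (ρ σ : Matrix d d ℂ) : ℝ :=
  ((psdSqrt (psdSqrt σ * ρ * psdSqrt σ)).trace.re) ^ 2

open scoped MatrixOrder

lemma psdSqrt_eq_sqrt {d : Type*} [Fintype d] [DecidableEq d] {A : Matrix d d ℂ}
    (hA : A.PosSemidef) : psdSqrt A = CFC.sqrt A := by
  rw [CFC.sqrt_eq_real_sqrt A hA.nonneg, cfcₙ_eq_cfc, hA.1.cfc_eq, IsHermitian.cfc,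
    Unitary.conjStarAlgAut_apply, psdSqrt, dif_pos hA]
  rfl

namespace Matrix

variable {𝕜 n : Type*} [RCLike 𝕜] [Fintype n]

lemma PosSemidef.re_trace_nonneg {A : Matrix n n 𝕜} (hA : A.PosSemidef) :
    0 ≤ RCLike.re A.trace :=
  (RCLike.nonneg_iff.mp hA.trace_nonneg).1

lemma re_trace_le_re_trace {A B : Matrix n n 𝕜} (h : A ≤ B) :
    RCLike.re A.trace ≤ RCLike.re B.trace :=
  (RCLike.le_iff_re_im.mp (OrderHomClass.mono (tracePositiveLinearMap n ℝ 𝕜) h)).1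

lemma re_trace_conjTranspose_mul_le (X Y : Matrix n n 𝕜) :
    RCLike.re (Xᴴ * Y).trace ≤
      √(RCLike.re (Xᴴ * X).trace) * √(RCLike.re (Yᴴ * Y).trace) := by
  let _ := (1 : Matrix n n 𝕜).toMatrixSeminormedAddCommGroup PosSemidef.one
  let _ := (1 : Matrix n n 𝕜).toMatrixInnerProductSpace PosSemidef.one
  have inner_eq (x y : Matrix n n 𝕜) : inner 𝕜 x y = (y * 1 * xᴴ).trace := rfl
  simpa only [norm_eq_sqrt_re_inner (𝕜 := 𝕜), inner_eq, conjTranspose_conjTranspose, mul_one,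
    mul_comm √(RCLike.re (Yᴴ * Y).trace)] using re_inner_le_norm (𝕜 := 𝕜) Yᴴ Xᴴ

variable [DecidableEq n]

lemma re_trace_mul_conjTranspose_mul_le_of_le_one {W : Matrix n n 𝕜} (hW : Wᴴ * W ≤ 1)
    (C : Matrix n n 𝕜) :
    RCLike.re ((W * C)ᴴ * (W * C)).trace ≤ RCLike.re (Cᴴ * C).trace := by
  apply re_trace_le_re_trace
  simpa [star_eq_conjTranspose, conjTranspose_mul, mul_assoc] using
    star_left_conjugate_le_conjugate hW C

lemma exists_le_one_conjTranspose_mul_eq_sqrt (B : Matrix n n 𝕜) :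
    ∃ W : Matrix n n 𝕜, Wᴴ * W ≤ 1 ∧ Wᴴ * B = CFC.sqrt (Bᴴ * B) := by
  set M := Bᴴ * B
  have hM : 0 ≤ M := (posSemidef_conjTranspose_mul_self B).nonneg
  have hcont (f : ℝ → ℝ) : ContinuousOn f (spectrum ℝ M) :=
    (finite_real_spectrum (A := M)).continuousOn f
  have hsqrtM : CFC.sqrt M = cfc Real.sqrt M := by
    rw [CFC.sqrt_eq_real_sqrt M hM, cfcₙ_eq_cfc]
  -- `G` is the pseudo-inverse of `√M`; `W = B G` is the partial isometry of the polar decomposition.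
  set G := cfc (fun x => (√x)⁻¹) M
  have hG : Gᴴ = G := (cfc_predicate (fun x => (√x)⁻¹) M).star_eq
  have hGM : G * M = CFC.sqrt M := calc
    G * M = G * cfc id M := by rw [cfc_id ℝ M]
    _ = cfc (fun x => (√x)⁻¹ * x) M := (cfc_mul _ _ M (hcont _) (hcont _)).symm
    _ = cfc Real.sqrt M := cfc_congr fun x hx => by
      rw [← Real.mul_self_sqrt (spectrum_nonneg_of_nonneg hM hx),
        Real.sqrt_mul_self (Real.sqrt_nonneg x), ← mul_assoc, inv_mul_mul_self]
    _ = CFC.sqrt M := hsqrtM.symm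
  refine ⟨B * G, ?_, ?_⟩
  · calc (B * G)ᴴ * (B * G) = G * M * G := by
          rw [conjTranspose_mul, hG]
          simp only [M, mul_assoc]
      _ = cfc (fun x => √x * (√x)⁻¹) M := by
          rw [hGM, hsqrtM, ← cfc_mul _ _ M (hcont _) (hcont _)]
      _ ≤ 1 := cfc_le_one _ M fun _ _ => mul_inv_le_one
  · rw [conjTranspose_mul, hG, mul_assoc, hGM]

lemma conjTranspose_sqrt (A : Matrix n n 𝕜) : (CFC.sqrt A)ᴴ = CFC.sqrt A :=
  (CFC.sqrt_nonneg A).isSelfAdjoint.star_eq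

lemma conjTranspose_mul_self_sqrt_mul_sqrt {A : Matrix n n 𝕜} (hA : 0 ≤ A) (B : Matrix n n 𝕜) :
    (CFC.sqrt A * CFC.sqrt B)ᴴ * (CFC.sqrt A * CFC.sqrt B) = CFC.sqrt B * A * CFC.sqrt B := by
  rw [conjTranspose_mul, conjTranspose_sqrt, conjTranspose_sqrt, mul_assoc,
    ← mul_assoc (CFC.sqrt A), CFC.sqrt_mul_sqrt_self A hA, mul_assoc]

lemma trace_conjTranspose_mul_self_sqrt_mul_sqrt {A Γ : Matrix n n 𝕜} (hA : 0 ≤ A) (hΓ : 0 ≤ Γ) :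
    ((CFC.sqrt A * CFC.sqrt Γ)ᴴ * (CFC.sqrt A * CFC.sqrt Γ)).trace = (Γ * A).trace := by
  rw [conjTranspose_mul_self_sqrt_mul_sqrt hA, trace_mul_comm, ← mul_assoc,
    CFC.sqrt_mul_sqrt_self Γ hΓ]

lemma re_trace_mul_sqrt_mul_sqrt_le {W A B Γ : Matrix n n 𝕜} (hW : Wᴴ * W ≤ 1)
    (hA : 0 ≤ A) (hB : 0 ≤ B) (hΓ : 0 ≤ Γ) :
    RCLike.re (Wᴴ * (CFC.sqrt A * Γ * CFC.sqrt B)).trace ≤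
      √(RCLike.re (Γ * A).trace * RCLike.re (Γ * B).trace) := by
  have hterm : (Wᴴ * (CFC.sqrt A * Γ * CFC.sqrt B)).trace =
      ((W * (CFC.sqrt B * CFC.sqrt Γ))ᴴ * (CFC.sqrt A * CFC.sqrt Γ)).trace := by
    conv_lhs => rw [← CFC.sqrt_mul_sqrt_self Γ hΓ]
    rw [trace_mul_comm Wᴴ, conjTranspose_mul, conjTranspose_mul, conjTranspose_sqrt,
      conjTranspose_sqrt, trace_mul_comm (CFC.sqrt Γ * CFC.sqrt B * Wᴴ)]
    simp only [mul_assoc]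
  have hΓA : 0 ≤ RCLike.re (Γ * A).trace := by
    rw [← trace_conjTranspose_mul_self_sqrt_mul_sqrt hA hΓ]
    exact (posSemidef_conjTranspose_mul_self _).re_trace_nonneg
  calc RCLike.re (Wᴴ * (CFC.sqrt A * Γ * CFC.sqrt B)).trace
      ≤ √(RCLike.re ((W * (CFC.sqrt B * CFC.sqrt Γ))ᴴ * (W * (CFC.sqrt B * CFC.sqrt Γ))).trace) *
          √(RCLike.re ((CFC.sqrt A * CFC.sqrt Γ)ᴴ * (CFC.sqrt A * CFC.sqrt Γ)).trace) := by
        rw [hterm]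
        exact re_trace_conjTranspose_mul_le _ _
    _ ≤ √(RCLike.re (Γ * B).trace) * √(RCLike.re (Γ * A).trace) := by
        rw [trace_conjTranspose_mul_self_sqrt_mul_sqrt hA hΓ,
          ← trace_conjTranspose_mul_self_sqrt_mul_sqrt hB hΓ]
        exact mul_le_mul_of_nonneg_right
          (Real.sqrt_le_sqrt (re_trace_mul_conjTranspose_mul_le_of_le_one hW _))
          (Real.sqrt_nonneg _)
    _ = √(RCLike.re (Γ * A).trace * RCLike.re (Γ * B).trace) := by
        rw [mul_comm, Real.sqrt_mul hΓA]

lemma re_trace_sqrt_le_sum_sqrt_mul {ι : Type*} [Fintype ι] {A B : Matrix n n 𝕜}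
    (hA : 0 ≤ A) (hB : 0 ≤ B) (Γ : ι → Matrix n n 𝕜) (hΓ : ∀ i, 0 ≤ Γ i)
    (hΓsum : ∑ i, Γ i = 1) :
    RCLike.re (CFC.sqrt (CFC.sqrt B * A * CFC.sqrt B)).trace ≤
      ∑ i, √(RCLike.re (Γ i * A).trace * RCLike.re (Γ i * B).trace) := by
  obtain ⟨W, hW, hWB⟩ := exists_le_one_conjTranspose_mul_eq_sqrt (CFC.sqrt A * CFC.sqrt B)
  have hsplit : CFC.sqrt A * CFC.sqrt B = ∑ i, CFC.sqrt A * Γ i * CFC.sqrt B := by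
    rw [← Finset.sum_mul, ← Finset.mul_sum, hΓsum, mul_one]
  rw [← conjTranspose_mul_self_sqrt_mul_sqrt hA, ← hWB, hsplit, Finset.mul_sum, trace_sum, map_sum]
  exact Finset.sum_le_sum fun i _ => re_trace_mul_sqrt_mul_sqrt_le hW hA hB (hΓ i)

end Matrix

theorem stmt6_general {d : Type*} [Fintype d] [DecidableEq d] {m : ℕ}
    (ρ σ : Matrix d d ℂ) (hρ : ρ.PosSemidef) (hσ : σ.PosSemidef)
    (Γ : Fin m → Matrix d d ℂ) (hΓ : ∀ i, (Γ i).PosSemidef)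
    (hΓsum : ∑ i, Γ i = 1) :
    qFidelity ρ σ ≤ (∑ i, Real.sqrt ((Γ i * ρ).trace.re * (Γ i * σ).trace.re)) ^ 2 := by
  have hM : (CFC.sqrt σ * ρ * CFC.sqrt σ).PosSemidef := by
    rw [← conjTranspose_mul_self_sqrt_mul_sqrt hρ.nonneg]
    exact posSemidef_conjTranspose_mul_self _
  rw [qFidelity, psdSqrt_eq_sqrt hσ, psdSqrt_eq_sqrt hM]
  exact pow_le_pow_left₀ (CFC.sqrt_nonneg _).posSemidef.re_trace_nonneg
    (re_trace_sqrt_le_sum_sqrt_mul hρ.nonneg hσ.nonneg Γ (fun i => (hΓ i).nonneg) hΓsum) 2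

/-- For any POVM `{Γ_m}`, the fidelity is bounded by the squared Bhattacharyya
overlap of the induced measurement distributions. -/
theorem stmt6 {d : Type*} [Fintype d] [DecidableEq d] {m : ℕ}
    (ρ σ : Matrix d d ℂ) (hρ : ρ.PosSemidef) (hσ : σ.PosSemidef)
    (hρ1 : ρ.trace = 1) (hσ1 : σ.trace = 1)
    (Γ : Fin m → Matrix d d ℂ) (hΓ : ∀ i, (Γ i).PosSemidef)
    (hΓsum : ∑ i, Γ i = 1) :
    qFidelity ρ σ ≤ (∑ i, Real.sqrt ((Γ i * ρ).trace.re * (Γ i * σ).trace.re)) ^ 2 :=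
  stmt6_general ρ σ hρ hσ Γ hΓ hΓsum
end

section
/- Let p, q be probability distributions on a finite set S, and suppose there exist subsets A, B ⊆ S with p(A) ≥ 1-η and q(B) ≥ 1-η, and constants such that p(x) ≤ 2^{-n(a-τ)} on A and q(x) ≤ 2^{-n(b-τ)} on B, and |A ∩ B| ≤ 2^{nc}. Then the Bhattacharyya coefficient satisfies Σ_{x∈S} √(p(x)q(x)) ≤ 2^{-n((a+b)/2 - c - τ)} + 2√η. -/
/-!
Split the coefficient over `A ∩ B` and its complement `Aᶜ ∪ Bᶜ`. On `A ∩ B` every term is at most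
`√(2^{-n(a-τ)} 2^{-n(b-τ)}) = 2^{-n((a+b)/2-τ)}`, and there are at most `2^{nc}` terms. On `Aᶜ`
Cauchy–Schwarz bounds the sum by `√(p(Aᶜ)) √(q(Aᶜ)) ≤ √η`, and likewise on `Bᶜ`.
-/

open Finset

lemma Finset.sum_le_sum_inter_add_sum_compl_add_sum_compl {ι : Type*} [Fintype ι] [DecidableEq ι]
    {f : ι → ℝ} (hf : ∀ i, 0 ≤ f i) (A B : Finset ι) :
    ∑ i, f i ≤ ∑ i ∈ A ∩ B, f i + ∑ i ∈ Aᶜ, f i + ∑ i ∈ Bᶜ, f i := by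
  have hinter : 0 ≤ ∑ i ∈ Aᶜ ∩ Bᶜ, f i := sum_nonneg fun i _ => hf i
  have hunion := sum_union_inter (s₁ := Aᶜ) (s₂ := Bᶜ) (f := f)
  rw [← sum_add_sum_compl (A ∩ B) f, compl_inter]
  linarith

lemma Finset.sum_compl_le_of_one_sub_le_sum {ι : Type*} [Fintype ι] [DecidableEq ι]
    {p : ι → ℝ} (hp1 : ∑ i, p i ≤ 1) {A : Finset ι} {η : ℝ} (hpA : 1 - η ≤ ∑ i ∈ A, p i) :
    ∑ i ∈ Aᶜ, p i ≤ η := by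
  linarith [sum_add_sum_compl A p]

lemma sum_compl_sqrt_mul_le_sqrt {ι : Type*} [Fintype ι] [DecidableEq ι] {p q : ι → ℝ}
    (hp0 : ∀ i, 0 ≤ p i) (hq0 : ∀ i, 0 ≤ q i) (hp1 : ∑ i, p i ≤ 1) (hq1 : ∑ i, q i ≤ 1)
    {A : Finset ι} {η : ℝ} (hpA : 1 - η ≤ ∑ i ∈ A, p i) :
    ∑ i ∈ Aᶜ, √(p i * q i) ≤ √η := calc
  ∑ i ∈ Aᶜ, √(p i * q i) = ∑ i ∈ Aᶜ, √(p i) * √(q i) :=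
    sum_congr rfl fun i _ => Real.sqrt_mul (hp0 i) _
  _ ≤ √(∑ i ∈ Aᶜ, p i) * √(∑ i ∈ Aᶜ, q i) := Real.sum_sqrt_mul_sqrt_le _ hp0 hq0
  _ ≤ √η * √1 := by
    gcongr
    · exact sum_compl_le_of_one_sub_le_sum hp1 hpA
    · exact (sum_le_univ_sum_of_nonneg hq0).trans hq1
  _ = √η := by rw [Real.sqrt_one, mul_one]

lemma sum_inter_sqrt_mul_le {ι : Type*} [DecidableEq ι] {p q : ι → ℝ} (hq0 : ∀ i, 0 ≤ q i)
    {A B : Finset ι} {α β : ℝ} (hα : 0 ≤ α) (hpA : ∀ i ∈ A, p i ≤ α) (hqB : ∀ i ∈ B, q i ≤ β) :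
    ∑ i ∈ A ∩ B, √(p i * q i) ≤ #(A ∩ B) * √(α * β) := by
  rw [← nsmul_eq_mul]
  refine sum_le_card_nsmul _ _ _ fun i hi => Real.sqrt_le_sqrt ?_
  rw [mem_inter] at hi
  exact mul_le_mul (hpA i hi.1) (hqB i hi.2) (hq0 i) hα

lemma Real.sqrt_rpow_mul_rpow {b : ℝ} (hb : 0 < b) (u v : ℝ) :
    √(b ^ u * b ^ v) = b ^ ((u + v) / 2) := by
  rw [← Real.rpow_add hb, Real.sqrt_eq_rpow, ← Real.rpow_mul hb.le]
  ring_nf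

theorem stmt13_general {S : Type*} [Fintype S] [DecidableEq S] (p q : S → ℝ)
    (hp0 : ∀ x, 0 ≤ p x) (hq0 : ∀ x, 0 ≤ q x)
    (hp1 : ∑ x, p x = 1) (hq1 : ∑ x, q x = 1)
    (A B : Finset S) (a b c τ η : ℝ) (n : ℕ)
    (hpA : (1 - η) ≤ ∑ x ∈ A, p x) (hqB : (1 - η) ≤ ∑ x ∈ B, q x)
    (hpAub : ∀ x ∈ A, p x ≤ (2:ℝ) ^ (-((n:ℝ) * (a - τ))))
    (hqBub : ∀ x ∈ B, q x ≤ (2:ℝ) ^ (-((n:ℝ) * (b - τ))))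
    (hcard : ((A ∩ B).card : ℝ) ≤ (2:ℝ) ^ ((n:ℝ) * c)) :
    ∑ x, Real.sqrt (p x * q x)
      ≤ (2:ℝ) ^ (-((n:ℝ) * ((a + b) / 2 - c - τ))) + 2 * Real.sqrt η := by
  have hmain := sum_inter_sqrt_mul_le hq0 (by positivity) hpAub hqBub
  have htailA := sum_compl_sqrt_mul_le_sqrt hp0 hq0 hp1.le hq1.le hpA
  have htailB : ∑ x ∈ Bᶜ, √(p x * q x) ≤ √η := by
    simpa only [mul_comm (q _)] using sum_compl_sqrt_mul_le_sqrt hq0 hp0 hq1.le hp1.le hqB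
  rw [Real.sqrt_rpow_mul_rpow two_pos] at hmain
  have hcount : ((A ∩ B).card : ℝ) * (2:ℝ) ^ ((-((n:ℝ) * (a - τ)) + -((n:ℝ) * (b - τ))) / 2)
      ≤ (2:ℝ) ^ (-((n:ℝ) * ((a + b) / 2 - c - τ))) := by
    calc _ ≤ (2:ℝ) ^ ((n:ℝ) * c) * (2:ℝ) ^ ((-((n:ℝ) * (a - τ)) + -((n:ℝ) * (b - τ))) / 2) := by
          gcongr
      _ = _ := by rw [← Real.rpow_add two_pos]; ring_nf
  linarith [sum_le_sum_inter_add_sum_compl_add_sum_compl (fun x => Real.sqrt_nonneg (p x * q x)) A B]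

/-- Bhattacharyya coefficient bound from typical sets: if `p(A) ≥ 1-η`,
`q(B) ≥ 1-η`, `p ≤ 2^{-n(a-τ)}` on `A`, `q ≤ 2^{-n(b-τ)}` on `B` and
`|A ∩ B| ≤ 2^{nc}`, then `Σ_x √(p(x)q(x)) ≤ 2^{-n((a+b)/2 - c - τ)} + 2√η`. -/
theorem stmt13 {S : Type*} [Fintype S] [DecidableEq S] (p q : S → ℝ)
    (hp0 : ∀ x, 0 ≤ p x) (hq0 : ∀ x, 0 ≤ q x)
    (hp1 : ∑ x, p x = 1) (hq1 : ∑ x, q x = 1)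
    (A B : Finset S) (a b c τ η : ℝ) (hη : 0 ≤ η) (n : ℕ) (hn : 1 ≤ n)
    (hpA : (1 - η) ≤ ∑ x ∈ A, p x) (hqB : (1 - η) ≤ ∑ x ∈ B, q x)
    (hpAub : ∀ x ∈ A, p x ≤ (2:ℝ) ^ (-((n:ℝ) * (a - τ))))
    (hqBub : ∀ x ∈ B, q x ≤ (2:ℝ) ^ (-((n:ℝ) * (b - τ))))
    (hcard : ((A ∩ B).card : ℝ) ≤ (2:ℝ) ^ ((n:ℝ) * c)) :
    ∑ x, Real.sqrt (p x * q x)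
      ≤ (2:ℝ) ^ (-((n:ℝ) * ((a + b) / 2 - c - τ))) + 2 * Real.sqrt η :=
  stmt13_general p q hp0 hq0 hp1 hq1 A B a b c τ η n hpA hqB hpAub hqBub hcard
end
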